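/- Let g = (f, z) ∈ ℤ₂ ≀ ℤ. Let m be the smallest integer i with f(i) ≠ e if f is not identically trivial, and m = 0 otherwise; let n be the largest integer j with f(j) ≠ e if f is not identically trivial, and n = 0 otherwise. Then the word length of g with respect to the generators {a, h} equals #supp f + min{ 2·max{−m, 0} + max{n, 0} + |z − max{n, 0}| , 2·max{n, 0} + max{−m, 0} + |z + max{−m, 0}| }, where #supp f is the number of integers j with f(j) ≠ e. -/

import Mathlib

open Multiplicative

noncomputable section

/-- Convolution `w₁ ⊗ w₂` of two words: the word of length `max |w₁| |w₂|` whose `k`-th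
letter has `i`-th component the `k`-th letter of `wᵢ` (or `none`, the padding symbol `⋄`,
if `k` exceeds `|wᵢ|`). -/
def conv {α : Type} (w₁ w₂ : List α) : List (Option α × Option α) :=
  (List.range (max w₁.length w₂.length)).map fun k => (w₁[k]?, w₂[k]?)

/-- The word length of `g` with respect to the generating set `S`:
the least `n` such that `g` is a product of `n` elements of `S ∪ S⁻¹`. -/
def wordLength {G : Type*} [Group G] (S : Set G) (g : G) : ℕ :=
  sInf {n | ∃ l : List G, l.length = n ∧ (∀ x ∈ l, x ∈ S ∨ x⁻¹ ∈ S) ∧ l.prod = g}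

/-- The shift action of `B` on finitely supported functions `B → A` (written additively
via `Additive A`): `(b • f) x = f (b⁻¹ * x)`. -/
def lampAction (A B : Type*) [Group A] [Group B] :
    B →* MulAut (Multiplicative (B →₀ Additive A)) where
  toFun b :=
    { toFun := fun f => ofAdd (Finsupp.equivMapDomain (Equiv.mulLeft b) f.toAdd)
      invFun := fun f => ofAdd (Finsupp.equivMapDomain (Equiv.mulLeft b).symm f.toAdd)
      left_inv := fun f => toAdd.injective (by ext x; simp)
      right_inv := fun f => toAdd.injective (by ext x; simp)
      map_mul' := fun f g => toAdd.injective (by ext x; simp) }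
  map_one' := MulEquiv.ext fun f => toAdd.injective (by ext x; simp; rfl)
  map_mul' := fun b₁ b₂ => MulEquiv.ext fun f => toAdd.injective (by
    ext x
    simp [MulAut.mul_apply, MulEquiv.coe_mk, mul_assoc]; rfl)

/-- The restricted wreath product `A ≀ B`: pairs `(f, b)` with `f : B → A` finitely
supported and `b ∈ B`, with multiplication `(f, b)·(f′, b′) = (f·(f′ ∘ (b⁻¹·)), b·b′)`. -/
abbrev WreathProduct (A B : Type*) [Group A] [Group B] :=
  Multiplicative (B →₀ Additive A) ⋊[lampAction A B] B

/-- The element of `A ≀ B` whose function component is supported at `b` with value `x`,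
and whose `B`-component is `c`. -/
def wreath.mk' {A B : Type*} [Group A] [Group B] (b : B) (x : A) (c : B) :
    WreathProduct A B :=
  ⟨ofAdd (Finsupp.single b (Additive.ofMul x)), c⟩

/-- The lamplighter group `ℤ₂ ≀ ℤ`. -/
abbrev Lamplighter := WreathProduct (Multiplicative (ZMod 2)) (Multiplicative ℤ)

/-- The generator `a = (𝟎, 1)` of `ℤ₂ ≀ ℤ` (the shift). -/
def genA : Lamplighter := ⟨1, ofAdd (1 : ℤ)⟩

/-- The generator `h = (δ₀, 0)` of `ℤ₂ ≀ ℤ` (the lamp at the origin). -/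
def genH : Lamplighter := wreath.mk' (ofAdd (0 : ℤ)) (ofAdd (1 : ZMod 2)) 1

/-- The support of the lamp configuration of `g = (f, z) ∈ ℤ₂ ≀ ℤ`, as a finite set of
integers: the set of `j ∈ ℤ` with `f(j) ≠ e`. -/
def suppZ (g : Lamplighter) : Finset ℤ :=
  (Multiplicative.toAdd g.left).support.image Multiplicative.toAdd

/-- The smallest `i ∈ ℤ` with `f(i) ≠ e` (and `0` if `f` is identically trivial). -/
def mOf (g : Lamplighter) : ℤ :=
  if h : (suppZ g).Nonempty then (suppZ g).min' h else 0

/-- The largest `j ∈ ℤ` with `f(j) ≠ e` (and `0` if `f` is identically trivial). -/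
def nOf (g : Lamplighter) : ℤ :=
  if h : (suppZ g).Nonempty then (suppZ g).max' h else 0

/-- The position `z ∈ ℤ` of the lamplighter of `g = (f, z) ∈ ℤ₂ ≀ ℤ`. -/
def zOf (g : Lamplighter) : ℤ := Multiplicative.toAdd g.right


/-!
The right-hand side `Φ g` is the number of lit lamps plus the length of the shortest walk on `ℤ`
that starts at `0`, reaches both ends of the hull `[min m 0, max n 0]` of the lamps and the
origin, and stops at `z`. A potential `Φ ≥ 0` with `Φ 1 = 0` that changes by at most one under
right multiplication by a generator, and that every `g ≠ 1` can decrease that way, is the word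
length. For the lamplighter group, `a^{±1}` only moves `z` by one. `h` toggles the lamp at `z`:
lighting it changes the walk length not at all, since the walk already ends at `z`, so `Φ`
changes by exactly one. If the lamp at `z` is lit, turning it off decreases `Φ`; otherwise,
unless `g = 1`, one of `a^{±1}` shortens the walk.
-/

section WordLength

variable {G : Type*} [Group G] {S : Set G} {Φ : G → ℤ}

lemma apply_prod_le_length (map_one : Φ 1 = 0)
    (mul_le : ∀ g s, s ∈ S ∨ s⁻¹ ∈ S → Φ (g * s) ≤ Φ g + 1)
    (l : List G) (hl : ∀ x ∈ l, x ∈ S ∨ x⁻¹ ∈ S) : Φ l.prod ≤ l.length := by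
  induction l using List.reverseRecOn with
  | nil => simp [map_one]
  | append_singleton l s ih =>
    have hs := mul_le l.prod s (hl s (by simp))
    have hl := ih fun x hx => hl x (List.mem_append_left _ hx)
    rw [List.prod_append, List.prod_singleton, List.length_append, List.length_singleton]
    push_cast
    omega

lemma exists_word_length_le (nonneg : ∀ g, 0 ≤ Φ g)
    (exists_mul_lt : ∀ g, g ≠ 1 → ∃ s, (s ∈ S ∨ s⁻¹ ∈ S) ∧ Φ (g * s) < Φ g) (n : ℕ) (g : G)
    (hg : Φ g ≤ n) : ∃ l : List G, l.length ≤ n ∧ (∀ x ∈ l, x ∈ S ∨ x⁻¹ ∈ S) ∧ l.prod = g := by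
  induction n generalizing g with
  | zero =>
    by_cases hg1 : g = 1
    · exact ⟨[], le_rfl, by simp, hg1.symm⟩
    obtain ⟨s, -, hlt⟩ := exists_mul_lt g hg1
    exact absurd (nonneg (g * s)) (by omega)
  | succ n ih =>
    by_cases hg1 : g = 1
    · exact ⟨[], Nat.zero_le _, by simp, hg1.symm⟩
    obtain ⟨s, hs, hlt⟩ := exists_mul_lt g hg1
    obtain ⟨l, hlen, hl, hprod⟩ := ih (g * s) (by push_cast at hg; omega)
    refine ⟨l ++ [s⁻¹], by simpa using hlen, ?_, by simp [hprod]⟩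
    simp only [List.mem_append, List.mem_singleton]
    rintro x (hx | rfl)
    · exact hl x hx
    · rw [inv_inv]; exact hs.symm

/-- A potential that vanishes at `1`, grows by at most one along each edge of the Cayley graph
and can always be decreased along some edge is the word length. -/
theorem wordLength_eq_of_descent (nonneg : ∀ g, 0 ≤ Φ g) (map_one : Φ 1 = 0)
    (mul_le : ∀ g s, s ∈ S ∨ s⁻¹ ∈ S → Φ (g * s) ≤ Φ g + 1)
    (exists_mul_lt : ∀ g, g ≠ 1 → ∃ s, (s ∈ S ∨ s⁻¹ ∈ S) ∧ Φ (g * s) < Φ g) (g : G) :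
    (wordLength S g : ℤ) = Φ g := by
  obtain ⟨l, hlen, hl, rfl⟩ :=
    exists_word_length_le nonneg exists_mul_lt (Φ g).toNat g (Int.self_le_toNat _)
  have hle := apply_prod_le_length map_one mul_le
  have hΦ : Φ l.prod = l.length := by
    have := hle l hl
    have := nonneg l.prod
    omega
  have hleast : IsLeast {n | ∃ l' : List G, l'.length = n ∧ (∀ x ∈ l', x ∈ S ∨ x⁻¹ ∈ S) ∧
      l'.prod = l.prod} l.length := by
    refine ⟨⟨l, rfl, hl, rfl⟩, ?_⟩
    rintro _ ⟨l', rfl, hl', hprod⟩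
    have := hle l' hl'
    rw [hprod] at this
    omega
  rw [wordLength, hleast.csInf_eq, hΦ]

end WordLength

lemma mem_suppZ {g : Lamplighter} {x : ℤ} : x ∈ suppZ g ↔ toAdd g.left (ofAdd x) ≠ 0 := by
  simp [suppZ]

lemma eq_one_of_suppZ_eq_empty {g : Lamplighter} (hS : suppZ g = ∅) (hz : zOf g = 0) : g = 1 := by
  refine SemidirectProduct.ext (toAdd.injective ?_) (toAdd.injective hz)
  ext x
  simpa [mem_suppZ] using Finset.eq_empty_iff_forall_notMem.mp hS (toAdd x)

lemma suppZ_mul_genA (g : Lamplighter) : suppZ (g * genA) = suppZ g := by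
  simp [suppZ, genA]

lemma zOf_mul_genA (g : Lamplighter) : zOf (g * genA) = zOf g + 1 := by
  simp [zOf, genA]

lemma suppZ_mul_genA_inv (g : Lamplighter) : suppZ (g * genA⁻¹) = suppZ g := by
  simp [suppZ, genA]

lemma zOf_mul_genA_inv (g : Lamplighter) : zOf (g * genA⁻¹) = zOf g - 1 := by
  simp [zOf, genA, sub_eq_add_neg]

lemma toAdd_left_mul_genH (g : Lamplighter) :
    toAdd (g * genH).left = toAdd g.left + Finsupp.single g.right (Additive.ofMul (ofAdd 1)) := by
  rw [SemidirectProduct.mul_left, toAdd_mul]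
  simp [genH, wreath.mk', lampAction]

lemma zOf_mul_genH (g : Lamplighter) : zOf (g * genH) = zOf g := by
  simp [zOf, genH, wreath.mk']

lemma mem_suppZ_mul_genH {g : Lamplighter} {x : ℤ} :
    x ∈ suppZ (g * genH) ↔ (x ∈ suppZ g ↔ x ≠ zOf g) := by
  rw [mem_suppZ, mem_suppZ, toAdd_left_mul_genH, Finsupp.add_apply, Finsupp.single_apply]
  by_cases hx : x = zOf g
  · subst hx
    simp only [zOf, ofAdd_toAdd, if_true, ne_eq, not_true_eq_false, iff_false]
    generalize toAdd g.left g.right = v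
    revert v; decide
  · have : g.right ≠ ofAdd x := fun h => hx (by rw [zOf, h, toAdd_ofAdd])
    simp [this, hx]

lemma suppZ_mul_genH_of_notMem {g : Lamplighter} (h : zOf g ∉ suppZ g) :
    suppZ (g * genH) = insert (zOf g) (suppZ g) := by
  ext x
  rw [mem_suppZ_mul_genH, Finset.mem_insert]
  rcases eq_or_ne x (zOf g) with rfl | hx <;> tauto

lemma genH_mul_genH : genH * genH = 1 := by
  refine SemidirectProduct.ext (toAdd.injective ?_) (by simp [genH, wreath.mk'])
  rw [toAdd_left_mul_genH]
  change Finsupp.single genH.right _ + Finsupp.single genH.right _ = 0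
  rw [← Finsupp.single_add]
  exact Finsupp.single_eq_zero.mpr (by decide)

lemma genH_inv : genH⁻¹ = genH := inv_eq_of_mul_eq_one_right genH_mul_genH

lemma mul_genH_mul_genH (g : Lamplighter) : g * genH * genH = g := by
  rw [mul_assoc, genH_mul_genH, mul_one]

section Reach

variable {S : Finset ℤ} {x : ℤ}

def rightReach (S : Finset ℤ) : ℤ := (insert 0 S).max' (Finset.insert_nonempty 0 S)

def leftReach (S : Finset ℤ) : ℤ := -(insert 0 S).min' (Finset.insert_nonempty 0 S)

lemma rightReach_nonneg : 0 ≤ rightReach S :=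
  Finset.le_max' _ _ (Finset.mem_insert_self 0 S)

lemma leftReach_nonneg : 0 ≤ leftReach S :=
  neg_nonneg.mpr (Finset.min'_le _ _ (Finset.mem_insert_self 0 S))

lemma le_rightReach (hx : x ∈ S) : x ≤ rightReach S :=
  Finset.le_max' _ _ (Finset.mem_insert_of_mem hx)

lemma neg_leftReach_le (hx : x ∈ S) : -leftReach S ≤ x := by
  rw [leftReach, neg_neg]
  exact Finset.min'_le _ _ (Finset.mem_insert_of_mem hx)

lemma rightReach_mem (h : 0 < rightReach S) : rightReach S ∈ S := by
  have := Finset.max'_mem (insert 0 S) (Finset.insert_nonempty 0 S)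
  rw [Finset.mem_insert] at this
  exact this.resolve_left h.ne'

lemma neg_leftReach_mem (h : 0 < leftReach S) : -leftReach S ∈ S := by
  have := Finset.min'_mem (insert 0 S) (Finset.insert_nonempty 0 S)
  rw [Finset.mem_insert] at this
  rw [leftReach, neg_neg]
  exact this.resolve_left (by rw [leftReach] at h; omega)

lemma rightReach_insert (z : ℤ) (S : Finset ℤ) :
    rightReach (insert z S) = max z (rightReach S) := by
  simp only [rightReach, Finset.insert_comm 0 z,
    Finset.max'_insert z _ (Finset.insert_nonempty 0 S)]

lemma leftReach_insert (z : ℤ) (S : Finset ℤ) :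
    leftReach (insert z S) = max (-z) (leftReach S) := by
  simp only [leftReach, Finset.insert_comm 0 z, Finset.min'_insert z _ (Finset.insert_nonempty 0 S),
    max_neg_neg]

lemma eq_empty_of_reach_eq_zero (hL : leftReach S = 0) (hR : rightReach S = 0) (h0 : 0 ∉ S) :
    S = ∅ :=
  Finset.eq_empty_of_forall_notMem fun x hx => by
    have := le_rightReach hx
    have := neg_leftReach_le hx
    exact h0 (by convert hx; omega)

end Reach

lemma max_nOf_zero (g : Lamplighter) : max (nOf g) 0 = rightReach (suppZ g) := by
  rw [nOf]
  split_ifs with h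
  · rw [rightReach, Finset.max'_insert 0 _ h, max_comm]
  · simp [Finset.not_nonempty_iff_eq_empty.mp h, rightReach]

lemma max_neg_mOf_zero (g : Lamplighter) : max (-mOf g) 0 = leftReach (suppZ g) := by
  rw [mOf]
  split_ifs with h
  · rw [leftReach, Finset.min'_insert 0 _ h, ← max_neg_neg, neg_zero, max_comm]
  · simp [Finset.not_nonempty_iff_eq_empty.mp h, leftReach]

section TourLength

variable {L R z : ℤ}

def tourLength (L R z : ℤ) : ℤ := min (2 * L + R + |z - R|) (2 * R + L + |z + L|)

lemma tourLength_nonneg (hL : 0 ≤ L) (hR : 0 ≤ R) : 0 ≤ tourLength L R z := by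
  simp only [tourLength, abs_eq_max_neg]; omega

lemma tourLength_max_max (hL : 0 ≤ L) (hR : 0 ≤ R) :
    tourLength (max (-z) L) (max z R) z = tourLength L R z := by
  simp only [tourLength, abs_eq_max_neg]; omega

lemma tourLength_le_of_abs_sub_le {z' : ℤ} (h : |z' - z| ≤ 1) :
    tourLength L R z' ≤ tourLength L R z + 1 := by
  rw [abs_le] at h
  simp only [tourLength, abs_eq_max_neg]; omega

lemma tourLength_add_one_lt_or_sub_one_lt (hL : 0 ≤ L) (hR : 0 ≤ R) (hRz : 0 < R → z ≠ R)
    (hLz : 0 < L → z ≠ -L) (hne : L ≠ 0 ∨ R ≠ 0 ∨ z ≠ 0) :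
    tourLength L R (z + 1) < tourLength L R z ∨ tourLength L R (z - 1) < tourLength L R z := by
  simp only [tourLength, abs_eq_max_neg]; omega

end TourLength

def lampLength (g : Lamplighter) : ℤ :=
  (suppZ g).card + tourLength (leftReach (suppZ g)) (rightReach (suppZ g)) (zOf g)

lemma lampLength_nonneg (g : Lamplighter) : 0 ≤ lampLength g :=
  add_nonneg (Nat.cast_nonneg _) (tourLength_nonneg leftReach_nonneg rightReach_nonneg)

lemma lampLength_one : lampLength 1 = 0 := by
  have : suppZ 1 = ∅ := rfl
  simp [lampLength, this, leftReach, rightReach, tourLength, zOf]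

lemma lampLength_mul_genH_of_notMem {g : Lamplighter} (h : zOf g ∉ suppZ g) :
    lampLength (g * genH) = lampLength g + 1 := by
  rw [lampLength, lampLength, suppZ_mul_genH_of_notMem h, Finset.card_insert_of_notMem h,
    leftReach_insert, rightReach_insert, zOf_mul_genH,
    tourLength_max_max leftReach_nonneg rightReach_nonneg]
  push_cast
  ring

lemma lampLength_mul_genH_of_mem {g : Lamplighter} (h : zOf g ∈ suppZ g) :
    lampLength (g * genH) + 1 = lampLength g := by
  rw [← lampLength_mul_genH_of_notMem (by rw [mem_suppZ_mul_genH, zOf_mul_genH]; tauto),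
    mul_genH_mul_genH]

lemma lampLength_mul_genH_le (g : Lamplighter) : lampLength (g * genH) ≤ lampLength g + 1 := by
  by_cases h : zOf g ∈ suppZ g
  · linarith [lampLength_mul_genH_of_mem h]
  · rw [lampLength_mul_genH_of_notMem h]

lemma lampLength_mul_le (g s : Lamplighter)
    (hs : s ∈ ({genA, genH} : Set Lamplighter) ∨ s⁻¹ ∈ ({genA, genH} : Set Lamplighter)) :
    lampLength (g * s) ≤ lampLength g + 1 := by
  simp only [Set.mem_insert_iff, Set.mem_singleton_iff, inv_eq_iff_eq_inv, genH_inv] at hs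
  rcases hs with (rfl | rfl) | rfl | rfl
  · rw [lampLength, lampLength, suppZ_mul_genA, zOf_mul_genA, add_assoc, add_le_add_iff_left]
    exact tourLength_le_of_abs_sub_le (by simp)
  · exact lampLength_mul_genH_le g
  · rw [lampLength, lampLength, suppZ_mul_genA_inv, zOf_mul_genA_inv, add_assoc,
      add_le_add_iff_left]
    exact tourLength_le_of_abs_sub_le (by simp)
  · exact lampLength_mul_genH_le g

lemma exists_lampLength_mul_lt {g : Lamplighter} (hg : g ≠ 1) :
    ∃ s, (s ∈ ({genA, genH} : Set Lamplighter) ∨ s⁻¹ ∈ ({genA, genH} : Set Lamplighter)) ∧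
      lampLength (g * s) < lampLength g := by
  by_cases h : zOf g ∈ suppZ g
  · exact ⟨genH, by simp, by linarith [lampLength_mul_genH_of_mem h]⟩
  have hne : leftReach (suppZ g) ≠ 0 ∨ rightReach (suppZ g) ≠ 0 ∨ zOf g ≠ 0 := by
    by_contra! h0
    obtain ⟨hL, hR, hz⟩ := h0
    exact hg (eq_one_of_suppZ_eq_empty (eq_empty_of_reach_eq_zero hL hR (hz ▸ h)) hz)
  rcases tourLength_add_one_lt_or_sub_one_lt leftReach_nonneg rightReach_nonneg
    (fun hR hz => h (by rw [hz]; exact rightReach_mem hR))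
    (fun hL hz => h (by rw [hz]; exact neg_leftReach_mem hL)) hne
    with hlt | hlt
  · refine ⟨genA, by simp, ?_⟩
    rwa [lampLength, lampLength, suppZ_mul_genA, zOf_mul_genA, add_lt_add_iff_left]
  · refine ⟨genA⁻¹, by simp, ?_⟩
    rwa [lampLength, lampLength, suppZ_mul_genA_inv, zOf_mul_genA_inv, add_lt_add_iff_left]

/-- For `g = (f, z) ∈ ℤ₂ ≀ ℤ`, the word length of `g` with respect to
`{a, h}` equals
`#supp f + min{2·max{−m,0} + max{n,0} + |z − max{n,0}|, 2·max{n,0} + max{−m,0} + |z + max{−m,0}|}`. -/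
theorem lamplighter_wordLength_formula (g : Lamplighter) :
    (wordLength {genA, genH} g : ℤ) =
      (suppZ g).card +
        min (2 * max (-(mOf g)) 0 + max (nOf g) 0 + |zOf g - max (nOf g) 0|)
          (2 * max (nOf g) 0 + max (-(mOf g)) 0 + |zOf g + max (-(mOf g)) 0|) := by
  rw [max_neg_mOf_zero, max_nOf_zero]
  exact wordLength_eq_of_descent lampLength_nonneg lampLength_one lampLength_mul_le
    (fun _ => exists_lampLength_mul_lt) g

end
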